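/- Let P be a generic configuration of n points in the plane with the Orchard relation P ∼ Q iff n(P,Q) ≡ n−3 (mod 2). Then the Orchard relation has at most two equivalence classes; equivalently, for any three distinct points P_i, P_j, P_k, if P_i ≁ P_j and P_j ≁ P_k then P_i ∼ P_k. -/

import Mathlib

open scoped Classical

noncomputable section

/-- Orientation determinant of two vectors in the plane. -/
def det2 (u v : ℝ × ℝ) : ℝ := u.1 * v.2 - u.2 * v.1

/-- The line through `A` and `B` separates the points `P` and `Q`
(they lie in distinct open half-planes determined by the line). -/
def SepLine (A B P Q : ℝ × ℝ) : Prop :=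
  det2 (B - A) (P - A) * det2 (B - A) (Q - A) < 0

/-- A finite planar point set is a generic configuration if no three of its
points are collinear. -/
def Generic (C : Finset (ℝ × ℝ)) : Prop :=
  ∀ a ∈ C, ∀ b ∈ C, ∀ c ∈ C, a ≠ b → a ≠ c → b ≠ c →
    ¬ Collinear ℝ ({a, b, c} : Set (ℝ × ℝ))

/-- `nsep C P Q` is the number of lines spanned by (unordered) pairs of points of
`C \ {P,Q}` that separate `P` from `Q`. -/
def nsep (C : Finset (ℝ × ℝ)) (P Q : ℝ × ℝ) : ℕ :=
  (((C \ {P, Q}).powersetCard 2).filter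
    (fun s => ∃ A ∈ s, ∃ B ∈ s, A ≠ B ∧ SepLine A B P Q)).card

/-- The Orchard relation: `P ∼ Q` iff `n(P,Q) ≡ n - 3 (mod 2)` where `n = |C|`. -/
def Orchard (C : Finset (ℝ × ℝ)) (P Q : ℝ × ℝ) : Prop :=
  (nsep C P Q : ℤ) ≡ (C.card : ℤ) - 3 [ZMOD 2]

/-- A configuration is monochromatic if all its points are Orchard-equivalent. -/
def Mono (C : Finset (ℝ × ℝ)) : Prop :=
  ∀ P ∈ C, ∀ Q ∈ C, P ≠ Q → Orchard C P Q

/-- A configuration is in convex position if each of its points is a vertex of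
the convex hull. -/
def ConvexPos (C : Finset (ℝ × ℝ)) : Prop :=
  ∀ P ∈ C, P ∉ convexHull ℝ ((C : Set (ℝ × ℝ)) \ {P})

open Finset

/-!
Fix three points `P, Q, R` of the configuration and let `D` be the remaining `n - 3` points. In
`n(P,Q) + n(Q,R) + n(P,R)` a line through two points of `D` is counted an even number of times,
since a line misses a triangle or separates exactly two of its sides. A line through `A ∈ D` and
one of `P, Q, R` counts when it separates the other two; of the three lines `RA, PA, QA` exactly
one does this if `A` is outside the triangle `PQR` and all three do if `A` is inside. Hence the
sum is `≡ n - 3 (mod 2)`, so `P ≁ Q` and `Q ≁ R` force `P ∼ R`.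
-/

lemma sepLine_comm {A B P Q : ℝ × ℝ} : SepLine A B P Q ↔ SepLine B A P Q := by
  unfold SepLine det2
  simp only [Prod.fst_sub, Prod.snd_sub]
  ring_nf

lemma collinear_of_det2_eq_zero {a b c : ℝ × ℝ} (hab : a ≠ b) (h : det2 (b - a) (c - a) = 0) :
    Collinear ℝ ({a, b, c} : Set (ℝ × ℝ)) := by
  set u := b - a
  set v := c - a
  have hu : u.1 ^ 2 + u.2 ^ 2 ≠ 0 := by
    intro h0
    have h1 : u.1 = 0 := by nlinarith [sq_nonneg u.1, sq_nonneg u.2]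
    have h2 : u.2 = 0 := by nlinarith [sq_nonneg u.1, sq_nonneg u.2]
    exact hab (sub_eq_zero.mp (Prod.ext h1 h2)).symm
  -- `v` equals its orthogonal projection onto `ℝ u`
  have hv : c = ((u.1 * v.1 + u.2 * v.2) / (u.1 ^ 2 + u.2 ^ 2)) • (b -ᵥ a) +ᵥ a := by
    rw [vsub_eq_sub, vadd_eq_add, ← sub_eq_iff_eq_add]
    unfold det2 at h
    ext <;> simp only [Prod.smul_fst, Prod.smul_snd, smul_eq_mul] <;> field_simp <;>
      [linear_combination (-u.2) * h; linear_combination u.1 * h]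
  rw [Set.pair_comm b c, Set.insert_comm a c, hv]
  exact collinear_insert_of_mem_affineSpan_pair (smul_vsub_vadd_mem_affineSpan_pair _ _ _)

lemma Generic.det2_ne_zero {C : Finset (ℝ × ℝ)} (hC : Generic C) {a b c : ℝ × ℝ}
    (ha : a ∈ C) (hb : b ∈ C) (hc : c ∈ C) (hab : a ≠ b) (hac : a ≠ c) (hbc : b ≠ c) :
    det2 (b - a) (c - a) ≠ 0 :=
  fun h ↦ hC a ha b hb c hc hab hac hbc (collinear_of_det2_eq_zero hab h)

lemma ite_neg_add_ite_neg_add_ite_neg {a b c : ℝ} (ha : a ≠ 0) (hb : b ≠ 0) (hc : c ≠ 0) :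
    ((if a < 0 then 1 else 0) + (if b < 0 then 1 else 0) + (if c < 0 then 1 else 0) : ZMod 2) =
      if a * b * c < 0 then 1 else 0 := by
  rcases ha.lt_or_gt with ha | ha <;> rcases hb.lt_or_gt with hb | hb <;>
    rcases hc.lt_or_gt with hc | hc <;>
    simp [ha, hb, hc, ha.asymm, hb.asymm, hc.asymm, mul_neg_iff, mul_pos_iff] <;> decide

-- The three products multiply to a square, so an even number of them is negative.
lemma sepLine_sides_parity {A B P Q R : ℝ × ℝ} (hP : det2 (B - A) (P - A) ≠ 0)
    (hQ : det2 (B - A) (Q - A) ≠ 0) (hR : det2 (B - A) (R - A) ≠ 0) :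
    ((if SepLine A B P Q then 1 else 0) + (if SepLine A B Q R then 1 else 0) +
      (if SepLine A B P R then 1 else 0) : ZMod 2) = 0 := by
  set p := det2 (B - A) (P - A)
  set q := det2 (B - A) (Q - A)
  set r := det2 (B - A) (R - A)
  have hsq : ¬ p * q * (q * r) * (p * r) < 0 := by
    rw [not_lt, show p * q * (q * r) * (p * r) = (p * q * r) ^ 2 by ring]
    positivity
  unfold SepLine
  rw [ite_neg_add_ite_neg_add_ite_neg (mul_ne_zero hP hQ) (mul_ne_zero hQ hR) (mul_ne_zero hP hR),
    if_neg hsq]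

-- Here the three products multiply to minus a square.
lemma sepLine_cevians_parity {A P Q R : ℝ × ℝ} (hPQ : det2 (P - A) (Q - A) ≠ 0)
    (hPR : det2 (P - A) (R - A) ≠ 0) (hQR : det2 (Q - A) (R - A) ≠ 0) :
    ((if SepLine R A P Q then 1 else 0) + (if SepLine P A Q R then 1 else 0) +
      (if SepLine Q A P R then 1 else 0) : ZMod 2) = 1 := by
  set x := det2 (P - A) (Q - A)
  set y := det2 (P - A) (R - A)
  set z := det2 (Q - A) (R - A)
  have hR : det2 (A - R) (P - R) * det2 (A - R) (Q - R) = y * z := by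
    simp only [y, z, det2, Prod.fst_sub, Prod.snd_sub]; ring
  have hP : det2 (A - P) (Q - P) * det2 (A - P) (R - P) = x * y := by
    simp only [x, y, det2, Prod.fst_sub, Prod.snd_sub]; ring
  have hQ : det2 (A - Q) (P - Q) * det2 (A - Q) (R - Q) = -x * z := by
    simp only [x, z, det2, Prod.fst_sub, Prod.snd_sub]; ring
  have hneg : y * z * (x * y) * (-x * z) < 0 := by
    rw [show y * z * (x * y) * (-x * z) = -(x * y * z) ^ 2 by ring, neg_neg_iff_pos]
    positivity
  unfold SepLine
  rw [hR, hP, hQ, ite_neg_add_ite_neg_add_ite_neg (mul_ne_zero hPR hQR) (mul_ne_zero hPQ hPR)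
    (mul_ne_zero (neg_ne_zero.mpr hPQ) hQR), if_pos hneg]

/-- `nsep C P Q` is `sepCount (C \ {P, Q}) P Q`. -/
def sepCount (E : Finset (ℝ × ℝ)) (P Q : ℝ × ℝ) : ℕ :=
  ((E.powersetCard 2).filter (fun s => ∃ A ∈ s, ∃ B ∈ s, A ≠ B ∧ SepLine A B P Q)).card

lemma exists_sepLine_pair_iff {P Q a b : ℝ × ℝ} (hab : a ≠ b) :
    (∃ A ∈ ({a, b} : Finset (ℝ × ℝ)), ∃ B ∈ ({a, b} : Finset (ℝ × ℝ)), A ≠ B ∧ SepLine A B P Q) ↔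
      SepLine a b P Q := by
  refine ⟨?_, fun h ↦ ⟨a, by simp, b, by simp, hab, h⟩⟩
  rintro ⟨A, hA, B, hB, hAB, h⟩
  simp only [mem_insert, mem_singleton] at hA hB
  rcases hA with rfl | rfl <;> rcases hB with rfl | rfl
  exacts [absurd rfl hAB, h, sepLine_comm.mpr h, absurd rfl hAB]

lemma sepCount_insert {E : Finset (ℝ × ℝ)} {R P Q : ℝ × ℝ} (hR : R ∉ E) :
    sepCount (insert R E) P Q = sepCount E P Q + #{A ∈ E | SepLine R A P Q} := by
  unfold sepCount
  rw [powersetCard_succ_insert hR, filter_union, card_union_of_disjoint]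
  · congr 1
    rw [powersetCard_one, map_eq_image, image_image, filter_image, card_image_of_injOn]
    · refine congrArg _ (filter_congr fun A hA ↦ ?_)
      exact exists_sepLine_pair_iff (ne_of_mem_of_not_mem hA hR).symm
    · intro A hA B _ hAB
      have hAR : A ≠ R := ne_of_mem_of_not_mem (mem_filter.mp hA).1 hR
      have hA' : A ∈ ({R, B} : Finset (ℝ × ℝ)) :=
        (show ({R, A} : Finset (ℝ × ℝ)) = {R, B} from hAB) ▸ mem_insert_of_mem (mem_singleton_self A)
      simpa [hAR] using hA'
  · refine disjoint_left.mpr fun s hs hs' ↦ ?_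
    obtain ⟨t, -, rfl⟩ := mem_image.mp (mem_filter.mp hs').1
    exact hR ((mem_powersetCard.mp (mem_filter.mp hs).1).1 (mem_insert_self R t))

section Triangle

variable {C : Finset (ℝ × ℝ)} {P Q R : ℝ × ℝ}

lemma sepCount_add_sepCount_add_sepCount (hC : Generic C) (hP : P ∈ C) (hQ : Q ∈ C)
    (hR : R ∈ C) :
    (sepCount (C \ {P, Q, R}) P Q + sepCount (C \ {P, Q, R}) Q R +
      sepCount (C \ {P, Q, R}) P R : ZMod 2) = 0 := by
  simp only [sepCount, natCast_card_filter, ← sum_add_distrib]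
  refine sum_eq_zero fun s hs ↦ ?_
  obtain ⟨hsD, hs2⟩ := mem_powersetCard.mp hs
  obtain ⟨a, b, hab, rfl⟩ := card_eq_two.mp hs2
  have ha := hsD (mem_insert_self a {b})
  have hb := hsD (mem_insert_of_mem (mem_singleton_self b))
  simp only [mem_sdiff, mem_insert, mem_singleton, not_or] at ha hb
  simp only [exists_sepLine_pair_iff hab]
  exact sepLine_sides_parity (hC.det2_ne_zero ha.1 hb.1 hP hab ha.2.1 hb.2.1)
    (hC.det2_ne_zero ha.1 hb.1 hQ hab ha.2.2.1 hb.2.2.1)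
    (hC.det2_ne_zero ha.1 hb.1 hR hab ha.2.2.2 hb.2.2.2)

lemma card_sepLine_cevians (hC : Generic C) (hP : P ∈ C) (hQ : Q ∈ C) (hR : R ∈ C)
    (hPQ : P ≠ Q) (hPR : P ≠ R) (hQR : Q ≠ R) :
    (#{A ∈ C \ {P, Q, R} | SepLine R A P Q} + #{A ∈ C \ {P, Q, R} | SepLine P A Q R} +
      #{A ∈ C \ {P, Q, R} | SepLine Q A P R} : ZMod 2) = #(C \ {P, Q, R}) := by
  rw [card_eq_sum_ones (C \ {P, Q, R}), Nat.cast_sum, Nat.cast_one]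
  simp only [natCast_card_filter, ← sum_add_distrib]
  refine sum_congr rfl fun A hA ↦ ?_
  simp only [mem_sdiff, mem_insert, mem_singleton, not_or] at hA
  obtain ⟨hA, hAP, hAQ, hAR⟩ := hA
  exact sepLine_cevians_parity (hC.det2_ne_zero hA hP hQ hAP hAQ hPQ)
    (hC.det2_ne_zero hA hP hR hAP hAR hPR) (hC.det2_ne_zero hA hQ hR hAQ hAR hQR)

lemma nsep_eq_sepCount_add (hR : R ∈ C) (hRP : R ≠ P) (hRQ : R ≠ Q) :
    nsep C P Q = sepCount (C \ {P, Q, R}) P Q + #{A ∈ C \ {P, Q, R} | SepLine R A P Q} := by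
  have hD : C \ {P, Q} = insert R (C \ {P, Q, R}) := by
    ext X
    by_cases hX : X = R <;> simp [hX, hR, hRP, hRQ]
  rw [← sepCount_insert (by simp), ← hD]
  rfl

lemma nsep_add_nsep_add_nsep (hC : Generic C) (hP : P ∈ C) (hQ : Q ∈ C) (hR : R ∈ C)
    (hPQ : P ≠ Q) (hPR : P ≠ R) (hQR : Q ≠ R) :
    (nsep C P Q + nsep C Q R + nsep C P R : ZMod 2) + 3 = #C := by
  have hQRP : ({Q, R, P} : Finset (ℝ × ℝ)) = {P, Q, R} := by
    rw [pair_comm, insert_comm]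
  have hPRQ : ({P, R, Q} : Finset (ℝ × ℝ)) = {P, Q, R} := by
    rw [pair_comm]
  have hcard : #(C \ {P, Q, R}) + 3 = #C := by
    rw [← card_eq_three.mpr ⟨P, Q, R, hPQ, hPR, hQR, rfl⟩]
    exact card_sdiff_add_card_eq_card (by simp [insert_subset_iff, hP, hQ, hR])
  rw [nsep_eq_sepCount_add hR hPR.symm hQR.symm, nsep_eq_sepCount_add hP hPQ hPR,
    nsep_eq_sepCount_add hQ hPQ.symm hQR, hQRP, hPRQ, ← hcard]
  push_cast
  linear_combination sepCount_add_sepCount_add_sepCount hC hP hQ hR +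
    card_sepLine_cevians hC hP hQ hR hPQ hPR hQR

end Triangle

lemma orchard_iff {C : Finset (ℝ × ℝ)} {P Q : ℝ × ℝ} :
    Orchard C P Q ↔ (nsep C P Q : ZMod 2) + 3 = #C := by
  have := ZMod.intCast_eq_intCast_iff (nsep C P Q) (#C - 3) 2
  push_cast at this
  rw [Orchard, ← this, eq_sub_iff_add_eq]

/-- The Orchard relation has at most two classes: if `P_i ≁ P_j` and
`P_j ≁ P_k` then `P_i ∼ P_k`. -/
theorem orchard_at_most_two_classes (C : Finset (ℝ × ℝ)) (hC : Generic C)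
    (Pi Pj Pk : ℝ × ℝ) (hi : Pi ∈ C) (hj : Pj ∈ C) (hk : Pk ∈ C)
    (hij : Pi ≠ Pj) (hik : Pi ≠ Pk) (hjk : Pj ≠ Pk)
    (h1 : ¬ Orchard C Pi Pj) (h2 : ¬ Orchard C Pj Pk) :
    Orchard C Pi Pk := by
  have key := nsep_add_nsep_add_nsep hC hi hj hk hij hik hjk
  rw [orchard_iff] at h1 h2 ⊢
  generalize (nsep C Pi Pj : ZMod 2) = x, (nsep C Pj Pk : ZMod 2) = y,
    (nsep C Pi Pk : ZMod 2) = z, (#C : ZMod 2) = c at *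
  revert x y z c
  decide
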